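/- arXiv:2305.12269 — 2 statements merged into one kernel-verified Lean document; each statement's English description precedes it below -/
import Mathlib

section
/- Necessary condition 2 for the triangle averaging operator: if T_1 : L^p × L^q → L^r is bounded, then 1/p + 1/q ≤ d/r. In particular, testing on indicator functions of the annulus A_δ = {x : 1-δ ≤ |x| ≤ 1+δ} shows T_1(χ_{A_δ}, χ_{A_δ})(x) = 1 for all |x| < δ. -/
open MeasureTheory Metric Filter
open scoped ENNReal NNReal

noncomputable section

variable (d : ℕ)


/-- The product measurable structure on `d × d` real matrices. -/
instance matrixMeasurableSpace : MeasurableSpace (Matrix (Fin d) (Fin d) ℝ) :=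
  inferInstanceAs (MeasurableSpace (Fin d → Fin d → ℝ))

/-- Action of a matrix on a point of `ℝ^d`. -/
def rotAct (R : Matrix (Fin d) (Fin d) ℝ) (u : EuclideanSpace ℝ (Fin d)) :
    EuclideanSpace ℝ (Fin d) := WithLp.toLp 2 (R.mulVec u)

/-- The triangle averaging operator
`T₁(f,g)(x) = ∫_{O(d)} f(x - Ru) g(x - Rv) dμ(R)`. -/
def triangleAvg (μ : Measure (Matrix (Fin d) (Fin d) ℝ)) (u v : EuclideanSpace ℝ (Fin d))
    (f g : EuclideanSpace ℝ (Fin d) → ℝ) (x : EuclideanSpace ℝ (Fin d)) : ℝ :=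
  ∫ R, f (x - rotAct d R u) * g (x - rotAct d R v) ∂μ

/-- The annulus `A_δ = {x : 1-δ ≤ |x| ≤ 1+δ}`. -/
def annulus (δ : ℝ) : Set (EuclideanSpace ℝ (Fin d)) := {y | 1 - δ ≤ ‖y‖ ∧ ‖y‖ ≤ 1 + δ}

/-!
For `‖x‖ < δ` and every orthogonal `R`, both `x - R u` and `x - R v` lie in the annulus `A_δ`, so
`T₁(χ_{A_δ}, χ_{A_δ}) ≥ χ_{B(0,δ)}`. As `|B(0,δ)| ≈ δ^d` while `|A_δ| ≲ δ`, the bound gives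
`δ^{d/r} ≲ δ^{1/p + 1/q}` for all small `δ > 0`, and letting `δ → 0` yields `1/p + 1/q ≤ d/r`.
-/

lemma one_add_pow_sub_one_sub_pow_le {δ : ℝ} (hδ₀ : 0 ≤ δ) (hδ₁ : δ ≤ 1) (n : ℕ) :
    (1 + δ) ^ n - (1 - δ) ^ n ≤ 2 * n * 2 ^ n * δ := by
  have hmax : max |1 + δ| |1 - δ| ^ (n - 1) ≤ 2 ^ n := by
    calc max |1 + δ| |1 - δ| ^ (n - 1) ≤ 2 ^ (n - 1) := by
          gcongr
          exact max_le (by rw [abs_le]; constructor <;> linarith)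
            (by rw [abs_le]; constructor <;> linarith)
      _ ≤ 2 ^ n := pow_le_pow_right₀ one_le_two (Nat.sub_le n 1)
  calc (1 + δ) ^ n - (1 - δ) ^ n ≤ |(1 + δ) ^ n - (1 - δ) ^ n| := le_abs_self _
    _ ≤ |(1 + δ) - (1 - δ)| * n * max |1 + δ| |1 - δ| ^ (n - 1) := abs_pow_sub_pow_le ..
    _ ≤ |(1 + δ) - (1 - δ)| * n * 2 ^ n := by gcongr
    _ = 2 * n * 2 ^ n * δ := by
      rw [show (1 + δ) - (1 - δ) = 2 * δ by ring, abs_of_nonneg (by positivity)]; ring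

open scoped Topology in
lemma le_of_forall_mul_rpow_le {a b c₁ c₂ : ℝ} (hc₁ : 0 < c₁)
    (h : ∀ δ : ℝ, 0 < δ → δ ≤ 1 → c₁ * δ ^ a ≤ c₂ * δ ^ b) : b ≤ a := by
  by_contra! hab
  have hlim : Tendsto (fun δ : ℝ => c₂ * δ ^ (b - a)) (𝓝[>] 0) (𝓝 0) := by
    simpa [Real.zero_rpow (sub_pos.2 hab).ne'] using
      (((Real.continuousAt_rpow_const 0 (b - a) (Or.inr (sub_pos.2 hab).le)).tendsto).const_mul
        c₂).mono_left nhdsWithin_le_nhds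
  have hev : ∀ᶠ δ in 𝓝[>] (0 : ℝ), c₁ ≤ c₂ * δ ^ (b - a) := by
    filter_upwards [Ioc_mem_nhdsGT one_pos] with δ ⟨hδ₀, hδ₁⟩
    rw [Real.rpow_sub hδ₀, mul_div_assoc', le_div_iff₀ (Real.rpow_pos_of_pos hδ₀ a)]
    exact h δ hδ₀ hδ₁
  exact hc₁.not_ge (ge_of_tendsto hlim hev)

-- At `p = ⊤` both `(1 / p).toReal` and `1 / p.toReal` are `0`, so `⊤` needs no separate case.
lemma ENNReal.one_div_add_one_div_le_of_toReal {p q r : ℝ≥0∞} {n : ℕ} (hp : p ≠ 0) (hq : q ≠ 0)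
    (hr : r ≠ 0) (h : 1 / p.toReal + 1 / q.toReal ≤ n * (1 / r.toReal)) :
    1 / p + 1 / q ≤ n / r := by
  have hpq : 1 / p + 1 / q ≠ ⊤ := by simp [hp, hq]
  have hnr : (n : ℝ≥0∞) / r ≠ ⊤ := by simp [ENNReal.div_eq_top, hr]
  rw [← ENNReal.toReal_le_toReal hpq hnr, ENNReal.toReal_add (by simp [hp]) (by simp [hq])]
  simpa [div_eq_mul_inv] using h

section

variable {d} {μ : Measure (Matrix (Fin d) (Fin d) ℝ)} [IsProbabilityMeasure μ]
  {u v : EuclideanSpace ℝ (Fin d)}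

open Matrix in
lemma norm_rotAct {R : Matrix (Fin d) (Fin d) ℝ} (hR : R ∈ orthogonalGroup (Fin d) ℝ)
    (w : EuclideanSpace ℝ (Fin d)) : ‖rotAct d R w‖ = ‖w‖ := by
  have hRR : Rᵀ * R = 1 := by
    simpa [star_eq_conjTranspose] using (mem_orthogonalGroup_iff' (Fin d) ℝ).mp hR
  have hdot : (R *ᵥ w) ⬝ᵥ (R *ᵥ w) = w ⬝ᵥ w := by
    rw [dotProduct_mulVec, ← vecMul_transpose, vecMul_vecMul, hRR, vecMul_one]
  simp only [EuclideanSpace.norm_eq]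
  congr 1
  simpa [rotAct, dotProduct, pow_two, Real.norm_eq_abs, sq_abs] using hdot

lemma sub_mem_annulus {δ : ℝ} {x w : EuclideanSpace ℝ (Fin d)} (hx : ‖x‖ < δ) (hw : ‖w‖ = 1) :
    x - w ∈ annulus d δ :=
  ⟨by linarith [norm_sub_norm_le w x, norm_sub_rev x w], by linarith [norm_sub_le x w]⟩

lemma measurableSet_annulus (δ : ℝ) : MeasurableSet (annulus d δ) :=
  measurableSet_Icc.preimage measurable_norm

lemma annulus_eq_closedBall_diff_ball (δ : ℝ) :
    annulus d δ = closedBall (0 : EuclideanSpace ℝ (Fin d)) (1 + δ) \ ball 0 (1 - δ) := by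
  ext y
  simp [annulus, and_comm]

lemma volume_annulus_le [NeZero d] {δ : ℝ} (hδ₀ : 0 ≤ δ) (hδ₁ : δ ≤ 1) :
    volume (annulus d δ) ≤
      ENNReal.ofReal (2 * d * 2 ^ d * δ) * volume (ball (0 : EuclideanSpace ℝ (Fin d)) 1) := by
  rw [annulus_eq_closedBall_diff_ball, measure_sdiff (ball_subset_closedBall.trans
      (closedBall_subset_closedBall (by linarith))) measurableSet_ball.nullMeasurableSet
      measure_ball_lt_top.ne, Measure.addHaar_ball _ _ (by linarith : (0:ℝ) ≤ 1 - δ),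
    Measure.addHaar_closedBall _ _ (by linarith : (0:ℝ) ≤ 1 + δ), finrank_euclideanSpace_fin,
    tsub_le_iff_right, ← add_mul, ← ENNReal.ofReal_add (by positivity) (by bound)]
  gcongr
  linarith [one_add_pow_sub_one_sub_pow_le hδ₀ hδ₁ d]

theorem triangleAvg_annulus_indicator_eq_one
    (hμ : μ {A | A ∉ Matrix.orthogonalGroup (Fin d) ℝ} = 0) (hu : ‖u‖ = 1) (hv : ‖v‖ = 1)
    {δ : ℝ} {x : EuclideanSpace ℝ (Fin d)} (hx : ‖x‖ < δ) :
    triangleAvg d μ u v ((annulus d δ).indicator 1) ((annulus d δ).indicator 1) x = 1 := by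
  have hmem : ∀ᵐ R ∂μ, x - rotAct d R u ∈ annulus d δ ∧ x - rotAct d R v ∈ annulus d δ := by
    filter_upwards [ae_iff.mpr hμ] with R hR
    exact ⟨sub_mem_annulus hx ((norm_rotAct hR u).trans hu),
      sub_mem_annulus hx ((norm_rotAct hR v).trans hv)⟩
  rw [triangleAvg, integral_congr_ae (g := fun _ => (1 : ℝ)) ?_]
  · simp
  filter_upwards [hmem] with R ⟨hRu, hRv⟩
  simp [hRu, hRv]

lemma volume_ball_rpow_le_eLpNorm_triangleAvg
    (hμ : μ {A | A ∉ Matrix.orthogonalGroup (Fin d) ℝ} = 0) (hu : ‖u‖ = 1) (hv : ‖v‖ = 1)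
    {r : ℝ≥0∞} (hr : r ≠ 0) {δ : ℝ} (hδ : 0 < δ) :
    volume (ball (0 : EuclideanSpace ℝ (Fin d)) δ) ^ (1 / r.toReal) ≤
      eLpNorm (triangleAvg d μ u v ((annulus d δ).indicator 1) ((annulus d δ).indicator 1))
        r volume := by
  have hball : eLpNorm ((ball (0 : EuclideanSpace ℝ (Fin d)) δ).indicator fun _ => (1 : ℝ))
      r volume = volume (ball (0 : EuclideanSpace ℝ (Fin d)) δ) ^ (1 / r.toReal) := by
    rw [eLpNorm_indicator_const' measurableSet_ball (measure_ball_pos _ _ hδ).ne' hr]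
    simp
  rw [← hball]
  refine eLpNorm_mono fun x => ?_
  by_cases hx : x ∈ ball (0 : EuclideanSpace ℝ (Fin d)) δ
  · rw [Set.indicator_of_mem hx,
      triangleAvg_annulus_indicator_eq_one hμ hu hv (mem_ball_zero_iff.mp hx)]
  · simp [Set.indicator_of_notMem hx]

lemma volume_ball_rpow_le_of_triangleAvg_bounded [NeZero d]
    (hμ : μ {A | A ∉ Matrix.orthogonalGroup (Fin d) ℝ} = 0) (hu : ‖u‖ = 1) (hv : ‖v‖ = 1)
    {p q r : ℝ≥0∞} (hr : r ≠ 0) (C : ℝ≥0)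
    (hbound : ∀ f g : EuclideanSpace ℝ (Fin d) → ℝ, Measurable f → Measurable g →
      eLpNorm (triangleAvg d μ u v f g) r volume ≤
        C * eLpNorm f p volume * eLpNorm g q volume)
    {δ : ℝ} (hδ₀ : 0 < δ) (hδ₁ : δ ≤ 1) :
    volume (ball (0 : EuclideanSpace ℝ (Fin d)) δ) ^ (1 / r.toReal) ≤
      C * (ENNReal.ofReal (2 * d * 2 ^ d * δ) * volume (ball (0 : EuclideanSpace ℝ (Fin d)) 1))
        ^ (1 / p.toReal + 1 / q.toReal) := by
  set χ := (annulus d δ).indicator (1 : EuclideanSpace ℝ (Fin d) → ℝ)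
  have hχ : Measurable χ := measurable_one.indicator (measurableSet_annulus δ)
  have hχnorm (s : ℝ≥0∞) : eLpNorm χ s volume ≤ volume (annulus d δ) ^ (1 / s.toReal) :=
    (eLpNorm_indicator_const_le (1 : ℝ) s).trans_eq (by simp)
  calc volume (ball (0 : EuclideanSpace ℝ (Fin d)) δ) ^ (1 / r.toReal)
      ≤ eLpNorm (triangleAvg d μ u v χ χ) r volume :=
        volume_ball_rpow_le_eLpNorm_triangleAvg hμ hu hv hr hδ₀
    _ ≤ C * eLpNorm χ p volume * eLpNorm χ q volume := hbound χ χ hχ hχ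
    _ ≤ C * volume (annulus d δ) ^ (1 / p.toReal) * volume (annulus d δ) ^ (1 / q.toReal) := by
        gcongr <;> exact hχnorm _
    _ ≤ C * (ENNReal.ofReal (2 * d * 2 ^ d * δ) * volume (ball (0 : EuclideanSpace ℝ (Fin d)) 1))
          ^ (1 / p.toReal) * (ENNReal.ofReal (2 * d * 2 ^ d * δ) *
          volume (ball (0 : EuclideanSpace ℝ (Fin d)) 1)) ^ (1 / q.toReal) := by
        gcongr <;> exact volume_annulus_le hδ₀.le hδ₁
    _ = _ := by rw [mul_assoc, ← ENNReal.rpow_add_of_nonneg _ _ (by positivity) (by positivity)]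

lemma one_div_add_one_div_toReal_le_of_triangleAvg_bounded [NeZero d]
    (hμ : μ {A | A ∉ Matrix.orthogonalGroup (Fin d) ℝ} = 0) (hu : ‖u‖ = 1) (hv : ‖v‖ = 1)
    {p q r : ℝ≥0∞} (hr : r ≠ 0) (C : ℝ≥0)
    (hbound : ∀ f g : EuclideanSpace ℝ (Fin d) → ℝ, Measurable f → Measurable g →
      eLpNorm (triangleAvg d μ u v f g) r volume ≤
        C * eLpNorm f p volume * eLpNorm g q volume) :
    1 / p.toReal + 1 / q.toReal ≤ d * (1 / r.toReal) := by
  obtain ⟨b, hb, hB⟩ : ∃ b : ℝ, 0 < b ∧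
      volume (ball (0 : EuclideanSpace ℝ (Fin d)) 1) = ENNReal.ofReal b :=
    ⟨_, ENNReal.toReal_pos (measure_ball_pos _ _ one_pos).ne' measure_ball_lt_top.ne,
      (ENNReal.ofReal_toReal measure_ball_lt_top.ne).symm⟩
  set K : ℝ := 2 * d * 2 ^ d
  set s := 1 / p.toReal + 1 / q.toReal
  set e := 1 / r.toReal
  refine le_of_forall_mul_rpow_le (c₁ := b ^ e) (c₂ := C * (K * b) ^ s) (by positivity)
    fun δ hδ₀ hδ₁ => ?_
  have h := volume_ball_rpow_le_of_triangleAvg_bounded hμ hu hv hr C hbound hδ₀ hδ₁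
  rw [Measure.addHaar_ball _ _ hδ₀.le, finrank_euclideanSpace_fin, hB,
    ← ENNReal.ofReal_mul (by positivity), ← ENNReal.ofReal_mul (by positivity),
    ENNReal.ofReal_rpow_of_nonneg (by positivity) (by positivity),
    ENNReal.ofReal_rpow_of_nonneg (by positivity) (by positivity), ← ENNReal.ofReal_coe_nnreal,
    ← ENNReal.ofReal_mul C.coe_nonneg, ENNReal.ofReal_le_ofReal_iff (by positivity)] at h
  calc b ^ e * δ ^ (d * e) = (δ ^ d * b) ^ e := by
        rw [Real.mul_rpow (by positivity) hb.le, ← Real.rpow_natCast, ← Real.rpow_mul hδ₀.le]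
        ring
    _ ≤ C * (K * δ * b) ^ s := h
    _ = C * (K * b) ^ s * δ ^ s := by
        rw [mul_right_comm K, Real.mul_rpow (by positivity) hδ₀.le]
        ring

end

theorem triangle_necessary_condition_two (hd : 2 ≤ d)
    (μ : Measure (Matrix (Fin d) (Fin d) ℝ)) [IsProbabilityMeasure μ]
    (hμsupp : μ {A | A ∉ Matrix.orthogonalGroup (Fin d) ℝ} = 0)
    (u v : EuclideanSpace ℝ (Fin d)) (hu : ‖u‖ = 1) (hv : ‖v‖ = 1)
    (p q r : ℝ≥0∞) (hp : 1 ≤ p) (hq : 1 ≤ q) (hr : 0 < r)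
    (C : ℝ≥0)
    (hbound : ∀ f g : EuclideanSpace ℝ (Fin d) → ℝ, Measurable f → Measurable g →
      eLpNorm (triangleAvg d μ u v f g) r volume ≤
        C * eLpNorm f p volume * eLpNorm g q volume) :
    1 / p + 1 / q ≤ (d : ℝ≥0∞) / r ∧
      ∀ δ : ℝ, 0 < δ → ∀ x : EuclideanSpace ℝ (Fin d), ‖x‖ < δ →
        triangleAvg d μ u v ((annulus d δ).indicator 1) ((annulus d δ).indicator 1) x = 1 := by
  have : NeZero d := ⟨by omega⟩
  refine ⟨?_, fun δ _ x hx => triangleAvg_annulus_indicator_eq_one hμsupp hu hv hx⟩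
  have hexp := one_div_add_one_div_toReal_le_of_triangleAvg_bounded hμsupp hu hv hr.ne' C hbound
  exact ENNReal.one_div_add_one_div_le_of_toReal (one_pos.trans_le hp).ne'
    (one_pos.trans_le hq).ne' hr.ne' hexp
end
end

section
/- Support volume bound for angularly localized multipliers: for i, j, k ≥ 1, the set {(ξ,η) ∈ R^d × R^d : |ξ| ≤ 2^{i+1}, |η| ≤ 2^{j+1}, |sin θ(ξ,η)| ≤ 2^{-k+1}} has Lebesgue measure at most C 2^{(i+j)d} 2^{-k(d-1)}, where θ(ξ,η) is the angle between ξ and η. -/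
/-!
For fixed `ξ ≠ 0` with unit direction `u`, every admissible `η` satisfies
`‖η - ⟪u, η⟫ u‖ = ‖η‖ |sin θ(ξ, η)| ≤ 2^{j+1} 2^{-k+1}`, so the `ξ`-slice lies in a tube around the
line `ℝ u` of length `2^{j+2}` and radius `2^{j+2-k}`. A reflection takes `u` to a coordinate
vector, after which the tube sits in a box of volume `2^{j+2} (2^{j+3-k})^{d-1}`. Integrating over
`ξ` in the ball of radius `2^{i+1}`, itself inside a cube of volume `2^{(i+2)d}`, gives the bound
by Fubini.
-/

open MeasureTheory Metric Filter
open scoped ENNReal NNReal RealInnerProductSpace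

noncomputable section

section LineTube

variable {E F : Type*} [NormedAddCommGroup E] [InnerProductSpace ℝ E]
  [NormedAddCommGroup F] [InnerProductSpace ℝ F]

def lineTube (u : E) (R r : ℝ) : Set E := {η | |⟪u, η⟫| ≤ R ∧ ‖η - ⟪u, η⟫ • u‖ ≤ r}

theorem isClosed_lineTube (u : E) (R r : ℝ) : IsClosed (lineTube u R r) :=
  (isClosed_le (f := fun η ↦ |⟪u, η⟫|) (by fun_prop) continuous_const).inter
    (isClosed_le (f := fun η ↦ ‖η - ⟪u, η⟫ • u‖) (by fun_prop) continuous_const)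

theorem LinearIsometryEquiv.preimage_lineTube (f : E ≃ₗᵢ[ℝ] F) (u : E) (R r : ℝ) :
    f ⁻¹' lineTube (f u) R r = lineTube u R r := by
  ext η
  simp only [lineTube, Set.mem_preimage, Set.mem_ofPred_eq, LinearIsometryEquiv.inner_map_map]
  rw [← f.map_smul, ← f.map_sub, f.norm_map]

theorem norm_sub_inner_smul_sq {u : E} (hu : ‖u‖ = 1) (η : E) :
    ‖η - ⟪u, η⟫ • u‖ ^ 2 = ‖η‖ ^ 2 - ⟪u, η⟫ ^ 2 := by
  rw [norm_sub_sq_real, real_inner_smul_right, real_inner_comm, norm_smul, hu, mul_one,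
    Real.norm_eq_abs, sq_abs]
  ring

theorem norm_sub_inner_smul_normalize {ξ : E} (hξ : ξ ≠ 0) (η : E) :
    ‖η - ⟪‖ξ‖⁻¹ • ξ, η⟫ • ‖ξ‖⁻¹ • ξ‖ =
      ‖η‖ * √(1 - (⟪ξ, η⟫ / (‖ξ‖ * ‖η‖)) ^ 2) := by
  have hu : ‖‖ξ‖⁻¹ • ξ‖ = 1 := norm_smul_inv_norm (𝕜 := ℝ) hξ
  have hsq : ‖η - ⟪‖ξ‖⁻¹ • ξ, η⟫ • ‖ξ‖⁻¹ • ξ‖ ^ 2 =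
      ‖η‖ ^ 2 * (1 - (⟪ξ, η⟫ / (‖ξ‖ * ‖η‖)) ^ 2) := by
    rw [norm_sub_inner_smul_sq hu, real_inner_smul_left]
    rcases eq_or_ne η 0 with rfl | hη
    · simp
    · field_simp [norm_ne_zero_iff.2 hη]
  rw [← Real.sqrt_sq (norm_nonneg (_ : E)), hsq, Real.sqrt_mul (sq_nonneg _),
    Real.sqrt_sq (norm_nonneg _)]

end LineTube

namespace EuclideanSpace

variable {ι : Type*} [Fintype ι]

theorem volume_setOf_forall_abs_le (c : ι → ℝ) :
    volume {x : EuclideanSpace ℝ ι | ∀ i, |x i| ≤ c i} = ∏ i, ENNReal.ofReal (2 * c i) := by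
  have : {x : EuclideanSpace ℝ ι | ∀ i, |x i| ≤ c i} =
      WithLp.ofLp ⁻¹' Set.univ.pi fun i ↦ Set.Icc (-c i) (c i) := by
    ext x
    simp only [Set.mem_preimage, Set.mem_univ_pi, Set.mem_Icc, Set.mem_ofPred_eq, abs_le]
  rw [this, (PiLp.volume_preserving_ofLp ι).measure_preimage
    (MeasurableSet.univ_pi fun _ ↦ measurableSet_Icc).nullMeasurableSet, volume_pi_pi]
  congr 1 with i
  rw [Real.volume_Icc]
  ring_nf

theorem volume_closedBall_zero_le (R : ℝ) :
    volume (closedBall (0 : EuclideanSpace ℝ ι) R) ≤ ENNReal.ofReal (2 * R) ^ Fintype.card ι := by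
  calc volume (closedBall (0 : EuclideanSpace ℝ ι) R)
      ≤ volume {x : EuclideanSpace ℝ ι | ∀ i, |x i| ≤ R} :=
        measure_mono fun x hx i ↦ (PiLp.norm_apply_le x i).trans (mem_closedBall_zero_iff.1 hx)
    _ = _ := by simp [volume_setOf_forall_abs_le]

end EuclideanSpace

theorem lineTube_single_zero_subset {m : ℕ} (R r : ℝ) :
    lineTube (EuclideanSpace.single 0 1 : EuclideanSpace ℝ (Fin (m + 1))) R r ⊆
      {x | ∀ i, |x i| ≤ if i = 0 then R else r} := by
  rintro η ⟨hR, hr⟩ i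
  rw [EuclideanSpace.inner_single_left, map_one, one_mul] at hR hr
  split_ifs with hi
  · rwa [hi]
  · calc |η i| = |(η - η 0 • EuclideanSpace.single (0 : Fin (m + 1)) (1 : ℝ)) i| := by
          simp [hi]
      _ ≤ r := (PiLp.norm_apply_le _ i).trans hr

theorem volume_lineTube_le {m : ℕ} {u : EuclideanSpace ℝ (Fin (m + 1))} (hu : ‖u‖ = 1)
    (R r : ℝ) :
    volume (lineTube u R r) ≤ ENNReal.ofReal (2 * R) * ENNReal.ofReal (2 * r) ^ m := by
  set e : EuclideanSpace ℝ (Fin (m + 1)) := EuclideanSpace.single 0 1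
  set f := Submodule.reflection (ℝ ∙ (u - e))ᗮ
  have hfu : f u = e := Submodule.reflection_sub (by simp [hu, e])
  calc volume (lineTube u R r) = volume (f ⁻¹' lineTube e R r) := by
        rw [← hfu, f.preimage_lineTube]
    _ = volume (lineTube e R r) :=
        f.measurePreserving.measure_preimage
          (isClosed_lineTube e R r).measurableSet.nullMeasurableSet
    _ ≤ volume {x : EuclideanSpace ℝ (Fin (m + 1)) | ∀ i, |x i| ≤ if i = 0 then R else r} :=
        measure_mono (lineTube_single_zero_subset R r)
    _ = ENNReal.ofReal (2 * R) * ENNReal.ofReal (2 * r) ^ m := by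
        simp [EuclideanSpace.volume_setOf_forall_abs_le, Fin.prod_univ_succ, Fin.succ_ne_zero]

section AngularRegion

variable {E : Type*} [NormedAddCommGroup E] [InnerProductSpace ℝ E]

def angularRegion (R₁ R₂ δ : ℝ) : Set (E × E) :=
  {p | ‖p.1‖ ≤ R₁ ∧ ‖p.2‖ ≤ R₂ ∧ √(1 - (⟪p.1, p.2⟫ / (‖p.1‖ * ‖p.2‖)) ^ 2) ≤ δ}

theorem measurableSet_angularRegion [MeasurableSpace E] [BorelSpace E]
    [SecondCountableTopology E] (R₁ R₂ δ : ℝ) : MeasurableSet (angularRegion (E := E) R₁ R₂ δ) := by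
  unfold angularRegion
  measurability

theorem preimage_mk_angularRegion_subset {ξ : E} (hξ : ξ ≠ 0) (R₁ R₂ δ : ℝ) :
    Prod.mk ξ ⁻¹' angularRegion R₁ R₂ δ ⊆ lineTube (‖ξ‖⁻¹ • ξ) R₂ (δ * R₂) := by
  rintro η ⟨-, hη, hangle⟩
  have hu : ‖‖ξ‖⁻¹ • ξ‖ = 1 := norm_smul_inv_norm (𝕜 := ℝ) hξ
  refine ⟨?_, ?_⟩
  · calc |⟪‖ξ‖⁻¹ • ξ, η⟫| ≤ ‖‖ξ‖⁻¹ • ξ‖ * ‖η‖ := abs_real_inner_le_norm _ _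
      _ ≤ R₂ := by rwa [hu, one_mul]
  · rw [norm_sub_inner_smul_normalize hξ, mul_comm δ]
    exact mul_le_mul hη hangle (Real.sqrt_nonneg _) ((norm_nonneg η).trans hη)

end AngularRegion

theorem volume_angularRegion_le {m : ℕ} (R₁ R₂ δ : ℝ) :
    volume (angularRegion R₁ R₂ δ : Set (EuclideanSpace ℝ (Fin (m + 1)) × _)) ≤
      ENNReal.ofReal (2 * R₁) ^ (m + 1) *
        (ENNReal.ofReal (2 * R₂) * ENNReal.ofReal (2 * (δ * R₂)) ^ m) := by
  set B := ENNReal.ofReal (2 * R₂) * ENNReal.ofReal (2 * (δ * R₂)) ^ m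
  have hslice : ∀ᵐ ξ, volume (Prod.mk ξ ⁻¹' angularRegion R₁ R₂ δ) ≤
      (closedBall (0 : EuclideanSpace ℝ (Fin (m + 1))) R₁).indicator (fun _ ↦ B) ξ := by
    filter_upwards [compl_mem_ae_iff.2 (measure_singleton (0 : EuclideanSpace ℝ (Fin (m + 1))))]
      with ξ (hξ : ξ ≠ 0)
    by_cases hξR : ξ ∈ closedBall 0 R₁
    · rw [Set.indicator_of_mem hξR]
      exact (measure_mono (preimage_mk_angularRegion_subset hξ R₁ R₂ δ)).trans
        (volume_lineTube_le (norm_smul_inv_norm (𝕜 := ℝ) hξ) _ _)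
    · rw [Set.indicator_of_notMem hξR, nonpos_iff_eq_zero]
      exact measure_mono_null (fun η hη ↦ hξR (mem_closedBall_zero_iff.2 hη.1)) measure_empty
  calc volume (angularRegion R₁ R₂ δ : Set (EuclideanSpace ℝ (Fin (m + 1)) × _))
      = ∫⁻ ξ, volume (Prod.mk ξ ⁻¹' angularRegion R₁ R₂ δ) := by
        rw [Measure.volume_eq_prod, Measure.prod_apply (measurableSet_angularRegion _ _ _)]
    _ ≤ ∫⁻ ξ, (closedBall (0 : EuclideanSpace ℝ (Fin (m + 1))) R₁).indicator (fun _ ↦ B) ξ :=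
        lintegral_mono_ae hslice
    _ = volume (closedBall (0 : EuclideanSpace ℝ (Fin (m + 1))) R₁) * B := by
        rw [lintegral_indicator measurableSet_closedBall, setLIntegral_const, mul_comm]
    _ ≤ _ := by
        gcongr
        simpa using EuclideanSpace.volume_closedBall_zero_le (ι := Fin (m + 1)) R₁

theorem ofReal_two_rpow_neg_add_one (k : ℕ) :
    ENNReal.ofReal (2 ^ (-(k : ℝ) + 1)) = 2 * (2 ^ k)⁻¹ := by
  rw [Real.rpow_add two_pos, Real.rpow_neg zero_le_two, Real.rpow_natCast, Real.rpow_one,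
    ENNReal.ofReal_mul (by positivity), ENNReal.ofReal_inv_of_pos (by positivity),
    ENNReal.ofReal_pow zero_le_two, ENNReal.ofReal_ofNat, mul_comm]

/-- **Support volume bound for angularly localized multipliers**: for `i, j, k ≥ 1`, the set
`{(ξ,η) ∈ ℝ^d × ℝ^d : |ξ| ≤ 2^{i+1}, |η| ≤ 2^{j+1}, |sin θ(ξ,η)| ≤ 2^{-k+1}}` has Lebesgue
measure at most `C 2^{(i+j)d} 2^{-k(d-1)}`, where `θ(ξ,η)` is the angle between `ξ` and `η`
(so that `|sin θ| = √(1 - (ξ·η / (|ξ||η|))²)`). -/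
theorem angular_localization_support_volume_bound (d : ℕ) (hd : 2 ≤ d) :
    ∃ C : ℝ≥0, ∀ i j k : ℕ, 1 ≤ i → 1 ≤ j → 1 ≤ k →
      volume {p : EuclideanSpace ℝ (Fin d) × EuclideanSpace ℝ (Fin d) |
          ‖p.1‖ ≤ 2 ^ (i + 1) ∧ ‖p.2‖ ≤ 2 ^ (j + 1) ∧
            Real.sqrt (1 - (⟪p.1, p.2⟫ / (‖p.1‖ * ‖p.2‖)) ^ 2) ≤ (2 : ℝ) ^ (-(k : ℝ) + 1)} ≤
        (C : ℝ≥0∞) * 2 ^ ((i + j) * d) * (2 : ℝ≥0∞) ^ (-((k : ℤ) * ((d : ℤ) - 1))) := by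
  obtain ⟨m, rfl⟩ : ∃ m, d = m + 1 := ⟨d - 1, by omega⟩
  refine ⟨2 ^ (5 * m + 4), fun i j k _ _ _ ↦ ?_⟩
  have hexp : -((k : ℤ) * (((m + 1 : ℕ) : ℤ) - 1)) = -((k * m : ℕ) : ℤ) := by push_cast; ring
  calc _ ≤ ENNReal.ofReal (2 * 2 ^ (i + 1)) ^ (m + 1) * (ENNReal.ofReal (2 * 2 ^ (j + 1)) *
          ENNReal.ofReal (2 * (2 ^ (-(k : ℝ) + 1) * 2 ^ (j + 1))) ^ m) :=
        volume_angularRegion_le _ _ _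
    _ = _ := by
        have hδ : (0 : ℝ) ≤ 2 ^ (-(k : ℝ) + 1) := by positivity
        rw [hexp, ENNReal.zpow_neg, zpow_natCast, pow_mul, ENNReal.inv_pow]
        simp only [ENNReal.ofReal_mul zero_le_two, ENNReal.ofReal_mul hδ,
          ENNReal.ofReal_pow zero_le_two, ENNReal.ofReal_ofNat, ofReal_two_rpow_neg_add_one,
          ENNReal.inv_pow]
        push_cast
        -- keeps `ring` from evaluating `2 ^ m * 2 ^ m` to `4 ^ m`
        generalize (2 : ℝ≥0∞) = x
        ring
end
end
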